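/- arXiv:1305.0539 — 10 statements merged into one kernel-verified Lean document; each statement's English description precedes it below -/
import Mathlib

section
/- Let p_{ijk} (i,j,k ∈ {1,2}) be nonnegative reals satisfying the nine supermodularity inequalities p_{111}p_{222} ≥ p_{112}p_{221}, p_{111}p_{222} ≥ p_{121}p_{212}, p_{111}p_{222} ≥ p_{211}p_{122}, p_{112}p_{222} ≥ p_{122}p_{212}, p_{121}p_{222} ≥ p_{122}p_{221}, p_{211}p_{222} ≥ p_{212}p_{221}, p_{111}p_{122} ≥ p_{112}p_{121}, p_{111}p_{212} ≥ p_{112}p_{211}, p_{111}p_{221} ≥ p_{121}p_{211}. Then p_{111}p_{222} + p_{221}p_{112} − p_{211}p_{122} − p_{121}p_{212} ≥ 0. -/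
/-! With `A = p111 p222`, `B = p211 p122`, `C = p121 p212`, `D = p221 p112`, the hypotheses give
`B, C ≤ A` and, multiplying two of the face inequalities, `B C ≤ A D`. Then
`A (A + D - B - C) ≥ A² + B C - A B - A C = (A - B)(A - C) ≥ 0`. -/

theorem add_le_add_of_mul_le_mul_of_le {R : Type*} [CommRing R] [LinearOrder R]
    [IsStrictOrderedRing R] {A B C D : R} (hB : B ≤ A) (hC : C ≤ A) (hBC : B * C ≤ A * D)
    (hD : 0 ≤ D) : B + C ≤ A + D := by
  rcases lt_or_ge 0 A with hA | hA
  · have h : 0 ≤ A * (A + D - (B + C)) := by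
      nlinarith [mul_nonneg (sub_nonneg.2 hB) (sub_nonneg.2 hC)]
    exact sub_nonneg.1 (nonneg_of_mul_nonneg_right h hA)
  · nlinarith [mul_nonneg (sub_nonneg.2 (hB.trans hA)) (sub_nonneg.2 (hC.trans hA)),
      mul_nonneg (neg_nonneg.2 hA) hD]

theorem stmt_3_general
    (p111 p112 p121 p122 p211 p212 p221 p222 : ℝ)
    (hnn : 0 ≤ p111 ∧ 0 ≤ p112 ∧ 0 ≤ p121 ∧ 0 ≤ p122 ∧
           0 ≤ p211 ∧ 0 ≤ p212 ∧ 0 ≤ p221 ∧ 0 ≤ p222)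
    (h2 : p111 * p222 ≥ p121 * p212)
    (h3 : p111 * p222 ≥ p211 * p122)
    (h4 : p112 * p222 ≥ p122 * p212)
    (h9 : p111 * p221 ≥ p121 * p211) :
    p111 * p222 + p221 * p112 - p211 * p122 - p121 * p212 ≥ 0 := by
  obtain ⟨-, h112, h121, -, h211, -, h221, h222⟩ := hnn
  have hBC : p211 * p122 * (p121 * p212) ≤ p111 * p222 * (p221 * p112) :=
    calc p211 * p122 * (p121 * p212) = p122 * p212 * (p121 * p211) := by ring
      _ ≤ p112 * p222 * (p111 * p221) :=
        mul_le_mul h4 h9 (mul_nonneg h121 h211) (mul_nonneg h112 h222)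
      _ = p111 * p222 * (p221 * p112) := by ring
  have := add_le_add_of_mul_le_mul_of_le h3 h2 hBC (mul_nonneg h221 h112)
  linarith

/-- supermodularity implies
p111p222 + p221p112 − p211p122 − p121p212 ≥ 0. -/
theorem stmt_3
    (p111 p112 p121 p122 p211 p212 p221 p222 : ℝ)
    (hnn : 0 ≤ p111 ∧ 0 ≤ p112 ∧ 0 ≤ p121 ∧ 0 ≤ p122 ∧
           0 ≤ p211 ∧ 0 ≤ p212 ∧ 0 ≤ p221 ∧ 0 ≤ p222)
    (h1 : p111 * p222 ≥ p112 * p221)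
    (h2 : p111 * p222 ≥ p121 * p212)
    (h3 : p111 * p222 ≥ p211 * p122)
    (h4 : p112 * p222 ≥ p122 * p212)
    (h5 : p121 * p222 ≥ p122 * p221)
    (h6 : p211 * p222 ≥ p212 * p221)
    (h7 : p111 * p122 ≥ p112 * p121)
    (h8 : p111 * p212 ≥ p112 * p211)
    (h9 : p111 * p221 ≥ p121 * p211) :
    p111 * p222 + p221 * p112 - p211 * p122 - p121 * p212 ≥ 0 :=
  stmt_3_general p111 p112 p121 p122 p211 p212 p221 p222 hnn h2 h3 h4 h9
end

section
/- Let p_{ijk} (i,j,k ∈ {1,2}) be nonnegative reals satisfying the nine supermodularity inequalities (p_{111}p_{222} ≥ p_{112}p_{221}, p_{111}p_{222} ≥ p_{121}p_{212}, p_{111}p_{222} ≥ p_{211}p_{122}, p_{112}p_{222} ≥ p_{122}p_{212}, p_{121}p_{222} ≥ p_{122}p_{221}, p_{211}p_{222} ≥ p_{212}p_{221}, p_{111}p_{122} ≥ p_{112}p_{121}, p_{111}p_{212} ≥ p_{112}p_{211}, p_{111}p_{221} ≥ p_{121}p_{211}). Define U_{12} = (p_{111}+p_{112})(p_{221}+p_{222})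 − (p_{121}+p_{122})(p_{211}+p_{212}), U_{12}^1 = p_{111}p_{221} − p_{121}p_{211}, U_{12}^2 = p_{112}p_{222} − p_{122}p_{212}. Then U_{12} ≥ 0, and if U_{12} = 0 then U_{12}^1 = 0 and U_{12}^2 = 0. -/
/-!
Write `U₁₂ = U₁₂¹ + U₁₂² + (A + D - a - b)` with `A = p₁₁₁p₂₂₂`, `D = p₁₁₂p₂₂₁`,
`a = p₁₂₁p₂₁₂`, `b = p₁₂₂p₂₁₁`. The first two summands are nonnegative by supermodularity.
Multiplying the two inequalities defining them gives `ab ≤ AD`, and together with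
`a, b ≤ A` this yields `a + b ≤ A + D`, since `A (A + D - a - b) = (A - a)(A - b) + (AD - ab)`.
So `U₁₂` is a sum of three nonnegative terms, and it vanishes only if each of them does.
-/

theorem add_le_add_of_le_of_mul_le_mul {A D a b : ℝ} (hA : 0 ≤ A) (hD : 0 ≤ D)
    (ha : a ≤ A) (hb : b ≤ A) (hab : a * b ≤ A * D) : a + b ≤ A + D := by
  rcases hA.eq_or_lt with rfl | hA
  · linarith
  · refine le_of_mul_le_mul_left ?_ hA
    nlinarith [mul_nonneg (sub_nonneg.2 ha) (sub_nonneg.2 hb)]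

theorem stmt_5_general
    (p111 p112 p121 p122 p211 p212 p221 p222 : ℝ)
    (hnn : 0 ≤ p111 ∧ 0 ≤ p112 ∧ 0 ≤ p121 ∧ 0 ≤ p122 ∧
           0 ≤ p211 ∧ 0 ≤ p212 ∧ 0 ≤ p221 ∧ 0 ≤ p222)
    (h2 : p111 * p222 ≥ p121 * p212)
    (h3 : p111 * p222 ≥ p211 * p122)
    (h4 : p112 * p222 ≥ p122 * p212)
    (h9 : p111 * p221 ≥ p121 * p211) :
    (p111 + p112) * (p221 + p222) - (p121 + p122) * (p211 + p212) ≥ 0 ∧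
    ((p111 + p112) * (p221 + p222) - (p121 + p122) * (p211 + p212) = 0 →
      p111 * p221 - p121 * p211 = 0 ∧ p112 * p222 - p122 * p212 = 0) := by
  obtain ⟨n111, n112, n121, n122, n211, n212, n221, n222⟩ := hnn
  have hcross : (p121 * p212) * (p122 * p211) ≤ (p111 * p222) * (p112 * p221) :=
    calc (p121 * p212) * (p122 * p211) = (p121 * p211) * (p122 * p212) := by ring
      _ ≤ (p111 * p221) * (p112 * p222) := mul_le_mul h9 h4 (by positivity) (by positivity)
      _ = (p111 * p222) * (p112 * p221) := by ring
  have hE : p121 * p212 + p122 * p211 ≤ p111 * p222 + p112 * p221 :=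
    add_le_add_of_le_of_mul_le_mul (by positivity) (by positivity) h2
      (by linarith) hcross
  have hsplit : (p111 + p112) * (p221 + p222) - (p121 + p122) * (p211 + p212) =
      (p111 * p221 - p121 * p211) + (p112 * p222 - p122 * p212) +
        (p111 * p222 + p112 * p221 - (p121 * p212 + p122 * p211)) := by ring
  exact ⟨by linarith, fun h0 => ⟨by linarith, by linarith⟩⟩

/-- under the nine supermodularity inequalities,
U12 ≥ 0, and U12 = 0 forces U12^1 = U12^2 = 0. -/
theorem stmt_5
    (p111 p112 p121 p122 p211 p212 p221 p222 : ℝ)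
    (hnn : 0 ≤ p111 ∧ 0 ≤ p112 ∧ 0 ≤ p121 ∧ 0 ≤ p122 ∧
           0 ≤ p211 ∧ 0 ≤ p212 ∧ 0 ≤ p221 ∧ 0 ≤ p222)
    (h1 : p111 * p222 ≥ p112 * p221)
    (h2 : p111 * p222 ≥ p121 * p212)
    (h3 : p111 * p222 ≥ p211 * p122)
    (h4 : p112 * p222 ≥ p122 * p212)
    (h5 : p121 * p222 ≥ p122 * p221)
    (h6 : p211 * p222 ≥ p212 * p221)
    (h7 : p111 * p122 ≥ p112 * p121)
    (h8 : p111 * p212 ≥ p112 * p211)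
    (h9 : p111 * p221 ≥ p121 * p211) :
    (p111 + p112) * (p221 + p222) - (p121 + p122) * (p211 + p212) ≥ 0 ∧
    ((p111 + p112) * (p221 + p222) - (p121 + p122) * (p211 + p212) = 0 →
      p111 * p221 - p121 * p211 = 0 ∧ p112 * p222 - p122 * p212 = 0) :=
  stmt_5_general p111 p112 p121 p122 p211 p212 p221 p222 hnn h2 h3 h4 h9
end

section
/- Let P = [p_{ijk}] be a real 2×2×2 tensor. Define the hyperdeterminant Det(P) = 4p_{111}p_{122}p_{212}p_{221} + 4p_{112}p_{121}p_{211}p_{222} + p_{111}²p_{222}² + p_{122}²p_{211}² + p_{112}²p_{221}² + p_{121}²p_{212}² − 2p_{111}p_{112}p_{221}p_{222} − 2p_{111}p_{121}p_{212}p_{222} − 2p_{111}p_{122}p_{211}p_{222} − 2p_{112}p_{121}p_{212}p_{221} − 2p_{112}p_{122}p_{211}p_{221} − 2p_{121}p_{122}p_{211}p_{212}. With U_{12}, U_{13}, U_{23} the determinants of the three 2×2 marginal matrices (summing over the third, second, first index respectively), p_{+++} the sum of all eight entries, and μ = p_{+++}²p_{222} − p_{+++}(p_{2++}p_{+22} +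 p_{+2+}p_{2+2} + p_{++2}p_{22+}) + 2p_{2++}p_{+2+}p_{++2}, the identity p_{+++}² · Det(P) = μ² + 4·U_{12}U_{13}U_{23} holds. -/
/-- the hyperdeterminant identity p+++² · Det(P) = μ² + 4·U12·U13·U23. -/
theorem stmt_7
    (p111 p112 p121 p122 p211 p212 p221 p222 : ℝ) :
    (p111 + p112 + p121 + p122 + p211 + p212 + p221 + p222) ^ 2 *
      (4 * p111 * p122 * p212 * p221 + 4 * p112 * p121 * p211 * p222 +
        p111 ^ 2 * p222 ^ 2 + p122 ^ 2 * p211 ^ 2 + p112 ^ 2 * p221 ^ 2 +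
        p121 ^ 2 * p212 ^ 2 -
        2 * p111 * p112 * p221 * p222 - 2 * p111 * p121 * p212 * p222 -
        2 * p111 * p122 * p211 * p222 - 2 * p112 * p121 * p212 * p221 -
        2 * p112 * p122 * p211 * p221 - 2 * p121 * p122 * p211 * p212) =
    ((p111 + p112 + p121 + p122 + p211 + p212 + p221 + p222) ^ 2 * p222 -
      (p111 + p112 + p121 + p122 + p211 + p212 + p221 + p222) *
        ((p211 + p212 + p221 + p222) * (p122 + p222) +
         (p121 + p122 + p221 + p222) * (p212 + p222) +
         (p112 + p122 + p212 + p222) * (p221 + p222)) +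
      2 * (p211 + p212 + p221 + p222) * (p121 + p122 + p221 + p222) *
        (p112 + p122 + p212 + p222)) ^ 2 +
    4 * ((p111 + p112) * (p221 + p222) - (p121 + p122) * (p211 + p212)) *
        ((p111 + p121) * (p212 + p222) - (p112 + p122) * (p211 + p221)) *
        ((p111 + p211) * (p122 + p222) - (p112 + p212) * (p121 + p221)) := by
  ring
end

section
/- Let P = [p_{ijk}] be a 2×2×2 tensor of the form p_{ijk} = s·a_{1i}a_{2j}a_{3k} + t·b_{1i}b_{2j}b_{3k}, where s,t ∈ ℝ and each vector a_r = (a_{r1},a_{r2}), b_r = (b_{r1},b_{r2}) has coordinates summing to 1. Then the hyperdeterminant satisfies Det(P) = (s·t·det A_1·det A_2·det A_3)², where A_r is the 2×2 matrix with rows a_r, b_r. -/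
theorem stmt_8_general
    (p111 p112 p121 p122 p211 p212 p221 p222 : ℝ)
    (s t : ℝ) (a11 a12 a21 a22 a31 a32 b11 b12 b21 b22 b31 b32 : ℝ)
    (h111 : p111 = s * (a11 * a21 * a31) + t * (b11 * b21 * b31))
    (h112 : p112 = s * (a11 * a21 * a32) + t * (b11 * b21 * b32))
    (h121 : p121 = s * (a11 * a22 * a31) + t * (b11 * b22 * b31))
    (h122 : p122 = s * (a11 * a22 * a32) + t * (b11 * b22 * b32))
    (h211 : p211 = s * (a12 * a21 * a31) + t * (b12 * b21 * b31))
    (h212 : p212 = s * (a12 * a21 * a32) + t * (b12 * b21 * b32))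
    (h221 : p221 = s * (a12 * a22 * a31) + t * (b12 * b22 * b31))
    (h222 : p222 = s * (a12 * a22 * a32) + t * (b12 * b22 * b32)) :
    4 * p111 * p122 * p212 * p221 + 4 * p112 * p121 * p211 * p222 +
      p111 ^ 2 * p222 ^ 2 + p122 ^ 2 * p211 ^ 2 + p112 ^ 2 * p221 ^ 2 +
      p121 ^ 2 * p212 ^ 2 -
      2 * p111 * p112 * p221 * p222 - 2 * p111 * p121 * p212 * p222 -
      2 * p111 * p122 * p211 * p222 - 2 * p112 * p121 * p212 * p221 -
      2 * p112 * p122 * p211 * p221 - 2 * p121 * p122 * p211 * p212 =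
    (s * t * (a11 * b12 - a12 * b11) * (a21 * b22 - a22 * b21) *
      (a31 * b32 - a32 * b31)) ^ 2 := by
  subst h111 h112 h121 h122 h211 h212 h221 h222
  ring

/-- for P = s·a1⊗a2⊗a3 + t·b1⊗b2⊗b3 with normalized vectors,
Det(P) = (s·t·det A1·det A2·det A3)². -/
theorem stmt_8
    (p111 p112 p121 p122 p211 p212 p221 p222 : ℝ)
    (s t : ℝ) (a11 a12 a21 a22 a31 a32 b11 b12 b21 b22 b31 b32 : ℝ)
    (hna1 : a11 + a12 = 1) (hna2 : a21 + a22 = 1) (hna3 : a31 + a32 = 1)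
    (hnb1 : b11 + b12 = 1) (hnb2 : b21 + b22 = 1) (hnb3 : b31 + b32 = 1)
    (h111 : p111 = s * (a11 * a21 * a31) + t * (b11 * b21 * b31))
    (h112 : p112 = s * (a11 * a21 * a32) + t * (b11 * b21 * b32))
    (h121 : p121 = s * (a11 * a22 * a31) + t * (b11 * b22 * b31))
    (h122 : p122 = s * (a11 * a22 * a32) + t * (b11 * b22 * b32))
    (h211 : p211 = s * (a12 * a21 * a31) + t * (b12 * b21 * b31))
    (h212 : p212 = s * (a12 * a21 * a32) + t * (b12 * b21 * b32))
    (h221 : p221 = s * (a12 * a22 * a31) + t * (b12 * b22 * b31))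
    (h222 : p222 = s * (a12 * a22 * a32) + t * (b12 * b22 * b32)) :
    4 * p111 * p122 * p212 * p221 + 4 * p112 * p121 * p211 * p222 +
      p111 ^ 2 * p222 ^ 2 + p122 ^ 2 * p211 ^ 2 + p112 ^ 2 * p221 ^ 2 +
      p121 ^ 2 * p212 ^ 2 -
      2 * p111 * p112 * p221 * p222 - 2 * p111 * p121 * p212 * p222 -
      2 * p111 * p122 * p211 * p222 - 2 * p112 * p121 * p212 * p221 -
      2 * p112 * p122 * p211 * p221 - 2 * p121 * p122 * p211 * p212 =
    (s * t * (a11 * b12 - a12 * b11) * (a21 * b22 - a22 * b21) *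
      (a31 * b32 - a32 * b31)) ^ 2 :=
  stmt_8_general p111 p112 p121 p122 p211 p212 p221 p222 s t a11 a12 a21 a22 a31 a32 b11 b12 b21 b22
    b31 b32 h111 h112 h121 h122 h211 h212 h221 h222
end

section
/- Let P be a nonnegative 2×2×2 tensor satisfying the nine supermodularity inequalities for the identity permutations. If U_{12} = 0 and U_{12}^1 = 0 and U_{12}^2 = 0 (notation as below), then either the flattening Flat_{1|23}(P), i.e. the 2×4 matrix with rows (p_{111},p_{112},p_{121},p_{122}) and (p_{211},p_{212},p_{221},p_{222}), has rank at most 1, or the flattening Flat_{2|13}(P), i.e. the 2×4 matrix with rows (p_{111},p_{112},p_{211},p_{212}) and (p_{121},p_{122},p_{221},p_{222}), has rank at most 1. -/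
/-! With A = p₁₁₁p₂₂₂, B = p₁₁₂p₂₂₁, C = p₁₂₁p₂₁₂, D = p₁₂₂p₂₁₁, the identities
U₁₂ - U₁₂¹ - U₁₂² = A + B - C - D and A·B - C·D = p₁₁₂p₂₂₂·U₁₂¹ + p₁₂₁p₂₁₁·U₁₂² show that
{A, B} = {C, D}. If A = D and B = C, the four minors of Flat₁|₂₃ that pair a column
(p₁₁ₖ, p₂₁ₖ) with a column (p₁₂ₗ, p₂₂ₗ) vanish, i.e. every column of the first block is
parallel to every column of the second. In the plane this forces all columns to be parallel
(rank ≤ 1), unless one block is zero, which is a zero row of Flat₂|₁₃. The case A = C, B = D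
is the same after exchanging the first two indices, which exchanges the two flattenings. -/

namespace Matrix

variable {K n : Type*} [Field K]

theorem rank_le_one_of_mul_eq_mul [Fintype n] (M : Matrix (Fin 2) n K)
    (h : ∀ j j', M 0 j * M 1 j' = M 0 j' * M 1 j) : M.rank ≤ 1 := by
  by_cases h0 : M 0 = 0
  · have hM : M = vecMulVec ![0, 1] (M 1) := by
      ext i j
      fin_cases i <;> simp [vecMulVec_apply, h0]
    exact hM ▸ rank_vecMulVec_le _ _
  · obtain ⟨j₀, hj₀⟩ : ∃ j, M 0 j ≠ 0 := by simpa [funext_iff] using h0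
    have hM : M = vecMulVec ![1, M 1 j₀ / M 0 j₀] (M 0) := by
      ext i j
      fin_cases i
      · simp [vecMulVec_apply]
      · simp only [Fin.mk_one, Fin.isValue, vecMulVec_apply, cons_val_one, cons_val_fin_one]
        rw [div_mul_eq_mul_div, eq_div_iff hj₀]
        linear_combination h j₀ j
    exact hM ▸ rank_vecMulVec_le _ _

theorem mul_eq_mul_of_col_ne_zero (M : Matrix (Fin 2) n K) {j j' k : n}
    (hk : Mᵀ k ≠ 0) (hj : M 0 j * M 1 k = M 0 k * M 1 j)
    (hj' : M 0 j' * M 1 k = M 0 k * M 1 j') :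
    M 0 j * M 1 j' = M 0 j' * M 1 j := by
  simp only [Ne, funext_iff, Fin.forall_fin_two, transpose_apply, Pi.zero_apply,
    not_and_or] at hk
  rcases hk with hk | hk
  · refine mul_right_cancel₀ hk ?_
    linear_combination M 0 j' * hj - M 0 j * hj'
  · refine mul_right_cancel₀ hk ?_
    linear_combination M 1 j' * hj - M 1 j * hj'

theorem rank_le_one_or_cols_eq_zero [Fintype n] (M : Matrix (Fin 2) n K) (p : n → Prop)
    (h : ∀ j k, p j → ¬p k → M 0 j * M 1 k = M 0 k * M 1 j) :
    M.rank ≤ 1 ∨ (∀ j, p j → Mᵀ j = 0) ∨ ∀ k, ¬p k → Mᵀ k = 0 := by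
  rw [or_iff_not_imp_right, not_or]
  push Not
  rintro ⟨⟨j₀, hpj₀, hj₀⟩, ⟨k₀, hpk₀, hk₀⟩⟩
  refine rank_le_one_of_mul_eq_mul M fun j j' => ?_
  by_cases hj : p j <;> by_cases hj' : p j'
  · exact mul_eq_mul_of_col_ne_zero M hk₀ (h j k₀ hj hpk₀) (h j' k₀ hj' hpk₀)
  · exact h j j' hj hj'
  · exact (h j' j hj' hj).symm
  · exact mul_eq_mul_of_col_ne_zero M hj₀ (h j₀ j hpj₀ hj).symm (h j₀ j' hpj₀ hj').symm

end Matrix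

theorem eq_and_eq_or_eq_and_eq_of_add_eq_add_of_mul_eq_mul {R : Type*} [CommRing R]
    [NoZeroDivisors R] {a b c d : R} (hs : a + b = c + d) (hp : a * b = c * d) :
    a = c ∧ b = d ∨ a = d ∧ b = c := by
  have : (a - c) * (a - d) = 0 := by linear_combination a * hs - hp
  rcases mul_eq_zero.mp this with h | h
  · exact Or.inl ⟨by linear_combination h, by linear_combination hs - h⟩
  · exact Or.inr ⟨by linear_combination h, by linear_combination hs - h⟩

open Matrix

theorem flattening_rank_le_one_of_cross_minors {K : Type*} [Field K]
    (p111 p112 p121 p122 p211 p212 p221 p222 : K)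
    (h11 : p111 * p221 = p121 * p211) (h12 : p111 * p222 = p122 * p211)
    (h21 : p112 * p221 = p121 * p212) (h22 : p112 * p222 = p122 * p212) :
    (!![p111, p112, p121, p122; p211, p212, p221, p222] : Matrix (Fin 2) (Fin 4) K).rank ≤ 1 ∨
    (!![p111, p112, p211, p212; p121, p122, p221, p222] : Matrix (Fin 2) (Fin 4) K).rank ≤ 1 := by
  obtain h | h | h := rank_le_one_or_cols_eq_zero
    !![p111, p112, p121, p122; p211, p212, p221, p222] (fun j => (j : ℕ) < 2)
    (by intro j k hj hk; fin_cases j <;> fin_cases k <;> simp at hj hk ⊢ <;> assumption)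
  · exact Or.inl h
  all_goals
    simp only [funext_iff, Fin.forall_fin_succ] at h
    refine Or.inr (rank_le_one_of_mul_eq_mul _ fun j j' => ?_)
    fin_cases j <;> fin_cases j' <;> simp_all

theorem stmt_10_general
    (p111 p112 p121 p122 p211 p212 p221 p222 : ℝ)
    (hU : (p111 + p112) * (p221 + p222) - (p121 + p122) * (p211 + p212) = 0)
    (hU1 : p111 * p221 - p121 * p211 = 0)
    (hU2 : p112 * p222 - p122 * p212 = 0) :
    (!![p111, p112, p121, p122; p211, p212, p221, p222] :
        Matrix (Fin 2) (Fin 4) ℝ).rank ≤ 1 ∨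
    (!![p111, p112, p211, p212; p121, p122, p221, p222] :
        Matrix (Fin 2) (Fin 4) ℝ).rank ≤ 1 := by
  have hsum : p111 * p222 + p112 * p221 = p121 * p212 + p122 * p211 := by
    linear_combination hU - hU1 - hU2
  have hprod : p111 * p222 * (p112 * p221) = p121 * p212 * (p122 * p211) := by
    linear_combination p112 * p222 * hU1 + p121 * p211 * hU2
  obtain ⟨hAC, hBD⟩ | ⟨hAD, hBC⟩ :=
    eq_and_eq_or_eq_and_eq_of_add_eq_add_of_mul_eq_mul hsum hprod
  · exact (flattening_rank_le_one_of_cross_minors p111 p112 p211 p212 p121 p122 p221 p222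
      (by linear_combination hU1) (by linear_combination hAC)
      (by linear_combination hBD) (by linear_combination hU2)).symm
  · exact flattening_rank_le_one_of_cross_minors _ _ _ _ _ _ _ _
      (by linear_combination hU1) hAD hBC (by linear_combination hU2)

/-- if a nonnegative supermodular 2×2×2 tensor has
U12 = U12^1 = U12^2 = 0, then one of the two flattenings Flat_{1|23} or
Flat_{2|13} has rank at most 1. -/
theorem stmt_10
    (p111 p112 p121 p122 p211 p212 p221 p222 : ℝ)
    (hnn : 0 ≤ p111 ∧ 0 ≤ p112 ∧ 0 ≤ p121 ∧ 0 ≤ p122 ∧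
           0 ≤ p211 ∧ 0 ≤ p212 ∧ 0 ≤ p221 ∧ 0 ≤ p222)
    (h1 : p111 * p222 ≥ p112 * p221)
    (h2 : p111 * p222 ≥ p121 * p212)
    (h3 : p111 * p222 ≥ p211 * p122)
    (h4 : p112 * p222 ≥ p122 * p212)
    (h5 : p121 * p222 ≥ p122 * p221)
    (h6 : p211 * p222 ≥ p212 * p221)
    (h7 : p111 * p122 ≥ p112 * p121)
    (h8 : p111 * p212 ≥ p112 * p211)
    (h9 : p111 * p221 ≥ p121 * p211)
    (hU : (p111 + p112) * (p221 + p222) - (p121 + p122) * (p211 + p212) = 0)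
    (hU1 : p111 * p221 - p121 * p211 = 0)
    (hU2 : p112 * p222 - p122 * p212 = 0) :
    (!![p111, p112, p121, p122; p211, p212, p221, p222] :
        Matrix (Fin 2) (Fin 4) ℝ).rank ≤ 1 ∨
    (!![p111, p112, p211, p212; p121, p122, p221, p222] :
        Matrix (Fin 2) (Fin 4) ℝ).rank ≤ 1 :=
  stmt_10_general p111 p112 p121 p122 p211 p212 p221 p222 hU hU1 hU2
end

section
/- A nonnegative 2×2×2 tensor P has nonnegative rank at most 2 if and only if P is supermodular, i.e. for some choice of permutations π_1, π_2, π_3 of {1,2}, the relabeled tensor [p_{π_1(i) π_2(j) π_3(k)}] satisfies the nine inequalities p_{111}p_{222} ≥ p_{112}p_{221}, p_{111}p_{222} ≥ p_{121}p_{212}, p_{111}p_{222} ≥ p_{211}p_{122}, p_{112}p_{222} ≥ p_{122}p_{212}, p_{121}p_{222} ≥ p_{122}p_{221}, p_{211}p_{222} ≥ p_{212}p_{221}, p_{111}p_{122} ≥ p_{112}p_{121}, p_{111}p_{212} ≥ p_{112}p_{211}, p_{111}p_{221} ≥ p_{121}p_{211} (applied to its entries). -/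
/-!
If `P = a₁ ⊗ a₂ ⊗ a₃ + b₁ ⊗ b₂ ⊗ b₃`, relabel each index so that the `2 × 2` matrix with columns
`aₘ, bₘ` has nonnegative determinant; each of the nine binomial differences is then a nonnegative
combination of products of these three determinants.

Conversely, let `A = Q 0` and `B = Q 1` be the slices of a supermodular tensor with `det B > 0`.
The pencil `A - t • B` has two real roots `0 ≤ μ ≤ ν` of its determinant, and supermodularity says
exactly that every ratio `A j k / B j k` lies in `[μ, ν]`. Hence `G = A - μ • B` and `H = ν • B - A`
are nonnegative rank-one matrices, and `A`, `B` are nonnegative combinations of `G` and `H`.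
Reversing all three indices reduces `det A > 0` to this case, and if both slices are singular they
are already rank one.
-/

/-- The nine supermodularity inequalities for a 2×2×2 tensor
(indices 0,1 correspond to the paper's 1,2). -/
def Supermod9 (Q : Fin 2 → Fin 2 → Fin 2 → ℝ) : Prop :=
  Q 0 0 0 * Q 1 1 1 ≥ Q 0 0 1 * Q 1 1 0 ∧
  Q 0 0 0 * Q 1 1 1 ≥ Q 0 1 0 * Q 1 0 1 ∧
  Q 0 0 0 * Q 1 1 1 ≥ Q 1 0 0 * Q 0 1 1 ∧
  Q 0 0 1 * Q 1 1 1 ≥ Q 0 1 1 * Q 1 0 1 ∧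
  Q 0 1 0 * Q 1 1 1 ≥ Q 0 1 1 * Q 1 1 0 ∧
  Q 1 0 0 * Q 1 1 1 ≥ Q 1 0 1 * Q 1 1 0 ∧
  Q 0 0 0 * Q 0 1 1 ≥ Q 0 0 1 * Q 0 1 0 ∧
  Q 0 0 0 * Q 1 0 1 ≥ Q 0 0 1 * Q 1 0 0 ∧
  Q 0 0 0 * Q 1 1 0 ≥ Q 0 1 0 * Q 1 0 0

/-- Nonnegative rank at most 2 for a 2×2×2 tensor. -/
def NNRank2 (P : Fin 2 → Fin 2 → Fin 2 → ℝ) : Prop :=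
  ∃ a1 a2 a3 b1 b2 b3 : Fin 2 → ℝ,
    (∀ i, 0 ≤ a1 i) ∧ (∀ i, 0 ≤ a2 i) ∧ (∀ i, 0 ≤ a3 i) ∧
    (∀ i, 0 ≤ b1 i) ∧ (∀ i, 0 ≤ b2 i) ∧ (∀ i, 0 ≤ b3 i) ∧
    ∀ i j k, P i j k = a1 i * a2 j * a3 k + b1 i * b2 j * b3 k

open Matrix

lemma NNRank2.comp {P : Fin 2 → Fin 2 → Fin 2 → ℝ} (hP : NNRank2 P) (σ₁ σ₂ σ₃ : Fin 2 → Fin 2) :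
    NNRank2 (fun i j k => P (σ₁ i) (σ₂ j) (σ₃ k)) := by
  obtain ⟨a₁, a₂, a₃, b₁, b₂, b₃, ha₁, ha₂, ha₃, hb₁, hb₂, hb₃, hP⟩ := hP
  exact ⟨a₁ ∘ σ₁, a₂ ∘ σ₂, a₃ ∘ σ₃, b₁ ∘ σ₁, b₂ ∘ σ₂, b₃ ∘ σ₃, fun _ => ha₁ _, fun _ => ha₂ _,
    fun _ => ha₃ _, fun _ => hb₁ _, fun _ => hb₂ _, fun _ => hb₃ _, fun _ _ _ => hP _ _ _⟩

lemma Supermod9.rev {Q : Fin 2 → Fin 2 → Fin 2 → ℝ} (hQ : Supermod9 Q) :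
    Supermod9 (fun i j k => Q i.rev j.rev k.rev) := by
  obtain ⟨h₁, h₂, h₃, h₄, h₅, h₆, h₇, h₈, h₉⟩ := hQ
  simp only [Supermod9, show Fin.rev (0 : Fin 2) = 1 from rfl,
    show Fin.rev (1 : Fin 2) = 0 from rfl]
  refine ⟨?_, ?_, ?_, ?_, ?_, ?_, ?_, ?_, ?_⟩ <;> linarith

-- A nonnegative singular `M` is the outer product of its row sums and its column sums scaled by
-- the total mass, since `M j k * ∑ M = (M j 0 + M j 1) * (M 0 k + M 1 k)` when `det M = 0`.
lemma exists_nonneg_outer_of_det_eq_zero {M : Matrix (Fin 2) (Fin 2) ℝ} (hM : ∀ j k, 0 ≤ M j k)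
    (hdet : M.det = 0) :
    ∃ p q : Fin 2 → ℝ, (∀ j, 0 ≤ p j) ∧ (∀ k, 0 ≤ q k) ∧ ∀ j k, M j k = p j * q k := by
  set S := M 0 0 + M 0 1 + M 1 0 + M 1 1
  rw [det_fin_two] at hdet
  have h₀₀ := hM 0 0; have h₀₁ := hM 0 1; have h₁₀ := hM 1 0; have h₁₁ := hM 1 1
  have hS : 0 ≤ S := by positivity
  refine ⟨fun j => M j 0 + M j 1, fun k => (M 0 k + M 1 k) / S,
    fun j => add_nonneg (hM j 0) (hM j 1), fun k => div_nonneg (add_nonneg (hM 0 k) (hM 1 k)) hS,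
    fun j k => ?_⟩
  rcases hS.eq_or_lt' with hS | hS
  · have : M j k = 0 := by
      fin_cases j <;> fin_cases k <;> simp only [Fin.zero_eta, Fin.mk_one] <;> linarith
    simp [hS, this]
  · rw [mul_div_assoc', eq_div_iff hS.ne']
    fin_cases j <;> fin_cases k <;> simp only [Fin.zero_eta, Fin.mk_one] <;> linarith

lemma nnrank2_of_slices {Q : Fin 2 → Fin 2 → Fin 2 → ℝ} {u v : Fin 2 → ℝ}
    {G H : Matrix (Fin 2) (Fin 2) ℝ} (hu : ∀ i, 0 ≤ u i) (hv : ∀ i, 0 ≤ v i)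
    (hG : ∀ j k, 0 ≤ G j k) (hH : ∀ j k, 0 ≤ H j k) (hGdet : G.det = 0) (hHdet : H.det = 0)
    (hQ : ∀ i j k, Q i j k = u i * G j k + v i * H j k) : NNRank2 Q := by
  obtain ⟨p, q, hp, hq, hGpq⟩ := exists_nonneg_outer_of_det_eq_zero hG hGdet
  obtain ⟨p', q', hp', hq', hHpq⟩ := exists_nonneg_outer_of_det_eq_zero hH hHdet
  refine ⟨u, p, q, v, p', q', hu, hp, hq, hv, hp', hq', fun i j k => ?_⟩
  rw [hQ, hGpq, hHpq]
  ring

lemma nnrank2_of_eq_mul {Q : Fin 2 → Fin 2 → Fin 2 → ℝ} {c : Fin 2 → ℝ}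
    {B : Matrix (Fin 2) (Fin 2) ℝ} (hc : ∀ i, 0 ≤ c i) (hB : ∀ j k, 0 ≤ B j k)
    (hQ : ∀ i j k, Q i j k = c i * B j k) : NNRank2 Q := by
  refine ⟨c, ![1, 0], B 0, c, ![0, 1], B 1, hc, ?_, hB 0, hc, ?_, hB 1, fun i j k => ?_⟩
  · intro j; fin_cases j <;> simp
  · intro j; fin_cases j <;> simp
  · rw [hQ]; fin_cases j <;> simp

def mixedDet {R : Type*} [CommRing R] (A B : Matrix (Fin 2) (Fin 2) R) : R :=
  A 0 0 * B 1 1 + A 1 1 * B 0 0 - A 0 1 * B 1 0 - A 1 0 * B 0 1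

lemma det_smul_sub_smul {R : Type*} [CommRing R] (A B : Matrix (Fin 2) (Fin 2) R) (x y : R) :
    (x • A - y • B).det = x ^ 2 * A.det - x * y * mixedDet A B + y ^ 2 * B.det := by
  simp only [det_fin_two, mixedDet, Matrix.sub_apply, Matrix.smul_apply, smul_eq_mul]
  ring

lemma mem_Icc_of_quadratic_nonpos {D m c r x y : ℝ} (hD : 0 < D) (hy : 0 ≤ y) (hr : 0 ≤ r)
    (hr2 : r ^ 2 = m ^ 2 - 4 * D * c) (hq : D * x ^ 2 - m * x * y + c * y ^ 2 ≤ 0) :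
    2 * D * x ∈ Set.Icc ((m - r) * y) ((m + r) * y) := by
  have hfac : (2 * D * x - (m - r) * y) * (2 * D * x - (m + r) * y) ≤ 0 := by
    linear_combination 4 * D * hq - y ^ 2 * hr2
  have := mul_nonneg hr hy
  rcases mul_nonpos_iff.mp hfac with ⟨h₁, h₂⟩ | ⟨h₁, h₂⟩ <;> constructor <;> linarith

lemma exists_pencil_roots {A B : Matrix (Fin 2) (Fin 2) ℝ} (hB : ∀ j k, 0 ≤ B j k)
    (hAdet : 0 ≤ A.det) (hBdet : 0 < B.det) (hm : 0 ≤ mixedDet A B)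
    (hAB : ∀ j k, (B j k • A - A j k • B).det ≤ 0) :
    ∃ μ ν : ℝ, 0 ≤ μ ∧ μ ≤ ν ∧ (∀ j k, μ * B j k ≤ A j k) ∧ (∀ j k, A j k ≤ ν * B j k) ∧
      (A - μ • B).det = 0 ∧ (A - ν • B).det = 0 := by
  set D := B.det
  set m := mixedDet A B
  have hq : ∀ j k, D * A j k ^ 2 - m * A j k * B j k + A.det * B j k ^ 2 ≤ 0 := fun j k => by
    have := hAB j k
    rw [det_smul_sub_smul] at this
    linarith
  have hB₁₁ : 0 < B 1 1 := by
    have : 0 < B 0 0 * B 1 1 := by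
      have := mul_nonneg (hB 0 1) (hB 1 0)
      have : D = B 0 0 * B 1 1 - B 0 1 * B 1 0 := det_fin_two B
      linarith
    exact pos_of_mul_pos_right this (hB 0 0)
  have hdisc : 0 ≤ m ^ 2 - 4 * D * A.det := by
    have : 0 ≤ (m ^ 2 - 4 * D * A.det) * B 1 1 ^ 2 := by
      nlinarith [hq 1 1, sq_nonneg (2 * D * A 1 1 - m * B 1 1)]
    exact nonneg_of_mul_nonneg_left this (by positivity)
  set r := √(m ^ 2 - 4 * D * A.det)
  have hr : 0 ≤ r := Real.sqrt_nonneg _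
  have hr2 : r ^ 2 = m ^ 2 - 4 * D * A.det := Real.sq_sqrt hdisc
  have hrm : r ≤ m := by
    calc r ≤ √(m ^ 2) := Real.sqrt_le_sqrt (by nlinarith)
      _ = m := Real.sqrt_sq hm
  have hbounds j k := mem_Icc_of_quadratic_nonpos hBdet (hB j k) hr hr2 (hq j k)
  refine ⟨(m - r) / (2 * D), (m + r) / (2 * D), by positivity, by gcongr; linarith,
    fun j k => ?_, fun j k => ?_, ?_, ?_⟩
  · rw [div_mul_eq_mul_div, div_le_iff₀ (by positivity)]
    linarith [(hbounds j k).1]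
  · rw [div_mul_eq_mul_div, le_div_iff₀ (by positivity)]
    linarith [(hbounds j k).2]
  · rw [← one_smul ℝ A, det_smul_sub_smul]
    field_simp
    linear_combination D * hr2
  · rw [← one_smul ℝ A, det_smul_sub_smul]
    field_simp
    linear_combination D * hr2

lemma nnrank2_of_pencil {A B : Matrix (Fin 2) (Fin 2) ℝ} (hB : ∀ j k, 0 ≤ B j k)
    (hAdet : 0 ≤ A.det) (hBdet : 0 < B.det) (hm : 0 ≤ mixedDet A B)
    (hAB : ∀ j k, (B j k • A - A j k • B).det ≤ 0) :
    NNRank2 ![A, B] := by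
  obtain ⟨μ, ν, hμ, hμν, hlow, hup, hdetμ, hdetν⟩ := exists_pencil_roots hB hAdet hBdet hm hAB
  rcases hμν.eq_or_lt with rfl | hlt
  · refine nnrank2_of_eq_mul (c := ![μ, 1]) (fun i => ?_) hB (fun i j k => ?_)
    · fin_cases i <;> simp [hμ]
    · fin_cases i
      · exact le_antisymm (hup j k) (hlow j k)
      · exact (one_mul _).symm
  · have hνμ : 0 < ν - μ := sub_pos.2 hlt
    refine nnrank2_of_slices (u := fun i => ![ν, 1] i / (ν - μ))
      (v := fun i => ![μ, 1] i / (ν - μ)) (G := A - μ • B) (H := ν • B - A)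
      (fun i => div_nonneg ?_ hνμ.le) (fun i => div_nonneg ?_ hνμ.le)
      (fun j k => ?_) (fun j k => ?_) hdetμ ?_ (fun i j k => ?_)
    · fin_cases i <;> simp only [Fin.zero_eta, Fin.mk_one, cons_val_zero, cons_val_one,
        cons_val_fin_one] <;> linarith
    · fin_cases i <;> simp [hμ]
    · simpa using hlow j k
    · simpa using hup j k
    · rw [← neg_sub, det_neg, hdetν, mul_zero]
    · fin_cases i
      · show A j k = ν / (ν - μ) * (A j k - μ * B j k) + μ / (ν - μ) * (ν * B j k - A j k)
        field_simp
        ring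
      · show B j k = 1 / (ν - μ) * (A j k - μ * B j k) + 1 / (ν - μ) * (ν * B j k - A j k)
        field_simp
        ring

lemma nnrank2_of_supermod9_of_det_pos {Q : Fin 2 → Fin 2 → Fin 2 → ℝ}
    (hQ : ∀ i j k, 0 ≤ Q i j k) (hs : Supermod9 Q)
    (hdet : Q 1 0 1 * Q 1 1 0 < Q 1 0 0 * Q 1 1 1) : NNRank2 Q := by
  obtain ⟨h₁, h₂, -, h₄, h₅, h₆, h₇, h₈, h₉⟩ := hs
  have hslices : Q = ![of (Q 0), of (Q 1)] := by
    funext i; fin_cases i <;> rfl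
  rw [hslices]
  refine nnrank2_of_pencil (hQ 1) ?_ ?_ ?_ fun j k => ?_
  · simp only [det_fin_two, of_apply]; linarith
  · simp only [det_fin_two, of_apply]; linarith
  · simp only [mixedDet, of_apply]
    have hde := mul_nonneg (hQ 0 1 1) (hQ 1 0 0)
    rcases (mul_nonneg (hQ 0 0 0) (hQ 1 1 1)).eq_or_lt' with hah | hah
    · linarith
    -- `Q₀₀₀Q₁₁₁ · mixedDet ≥ (Q₀₀₀Q₁₁₁ - Q₀₀₁Q₁₁₀)(Q₀₀₀Q₁₁₁ - Q₀₁₀Q₁₀₁)`,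
    -- since `Q₀₀₁Q₀₁₀ · Q₁₀₁Q₁₁₀ ≤ Q₀₀₀Q₀₁₁ · Q₁₀₀Q₁₁₁` by `h₇` and `h₆`
    have := mul_le_mul h₇ h₆ (mul_nonneg (hQ 1 0 1) (hQ 1 1 0))
      (mul_nonneg (hQ 0 0 0) (hQ 0 1 1))
    refine nonneg_of_mul_nonneg_right ?_ hah
    nlinarith [mul_nonneg (sub_nonneg.2 h₁) (sub_nonneg.2 h₂)]
  · fin_cases j <;> fin_cases k <;>
      simp only [Fin.zero_eta, Fin.mk_one, of_apply, smul_of, of_sub_of, det_fin_two, Pi.sub_apply,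
        Pi.smul_apply, smul_eq_mul] <;> nlinarith

lemma nnrank2_of_supermod9 {Q : Fin 2 → Fin 2 → Fin 2 → ℝ} (hQ : ∀ i j k, 0 ≤ Q i j k)
    (hs : Supermod9 Q) : NNRank2 Q := by
  have ⟨_, _, _, _, _, h₆, h₇, _, _⟩ := hs
  rcases h₆.lt_or_eq with h₁ | h₁
  · exact nnrank2_of_supermod9_of_det_pos hQ hs h₁
  rcases h₇.lt_or_eq with h₀ | h₀
  -- Supermodularity is invariant under reversing all three indices, which swaps the two slices.
  · have := nnrank2_of_supermod9_of_det_pos (fun _ _ _ => hQ _ _ _) hs.rev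
      (by simpa [mul_comm] using h₀)
    simpa using this.comp Fin.rev Fin.rev Fin.rev
  refine nnrank2_of_slices (u := ![1, 0]) (v := ![0, 1]) (G := of (Q 0)) (H := of (Q 1))
    (fun i => ?_) (fun i => ?_) (hQ 0) (hQ 1) ?_ ?_ (fun i j k => ?_)
  · fin_cases i <;> simp
  · fin_cases i <;> simp
  · simp only [det_fin_two, of_apply]; linarith
  · simp only [det_fin_two, of_apply]; linarith
  · fin_cases i <;> simp

lemma exists_perm_mul_le_mul (a b : Fin 2 → ℝ) :
    ∃ π : Equiv.Perm (Fin 2), a (π 1) * b (π 0) ≤ a (π 0) * b (π 1) := by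
  rcases le_total (a 1 * b 0) (a 0 * b 1) with h | h
  · exact ⟨Equiv.refl _, h⟩
  · exact ⟨Equiv.swap 0 1, by simpa [mul_comm] using h⟩

lemma supermod9_of_mul_le_mul {a₁ a₂ a₃ b₁ b₂ b₃ : Fin 2 → ℝ} (ha₁ : ∀ i, 0 ≤ a₁ i)
    (ha₂ : ∀ i, 0 ≤ a₂ i) (ha₃ : ∀ i, 0 ≤ a₃ i) (hb₁ : ∀ i, 0 ≤ b₁ i) (hb₂ : ∀ i, 0 ≤ b₂ i)
    (hb₃ : ∀ i, 0 ≤ b₃ i) (h₁ : a₁ 1 * b₁ 0 ≤ a₁ 0 * b₁ 1) (h₂ : a₂ 1 * b₂ 0 ≤ a₂ 0 * b₂ 1)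
    (h₃ : a₃ 1 * b₃ 0 ≤ a₃ 0 * b₃ 1) :
    Supermod9 (fun i j k => a₁ i * a₂ j * a₃ k + b₁ i * b₂ j * b₃ k) := by
  have d₁ := sub_nonneg.2 h₁
  have d₂ := sub_nonneg.2 h₂
  have d₃ := sub_nonneg.2 h₃
  refine ⟨?_, ?_, ?_, ?_, ?_, ?_, ?_, ?_, ?_⟩ <;> simp only [ge_iff_le]
  · nlinarith [mul_nonneg d₃ (mul_nonneg d₁ (mul_nonneg (ha₂ 0) (hb₂ 1))),
      mul_nonneg d₃ (mul_nonneg (mul_nonneg (ha₁ 1) (hb₁ 0)) d₂)]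
  · nlinarith [mul_nonneg d₂ (mul_nonneg d₁ (mul_nonneg (ha₃ 0) (hb₃ 1))),
      mul_nonneg d₂ (mul_nonneg (mul_nonneg (ha₁ 1) (hb₁ 0)) d₃)]
  · nlinarith [mul_nonneg d₁ (mul_nonneg d₂ (mul_nonneg (ha₃ 0) (hb₃ 1))),
      mul_nonneg d₁ (mul_nonneg (mul_nonneg (ha₂ 1) (hb₂ 0)) d₃)]
  · nlinarith [mul_nonneg (mul_nonneg (mul_nonneg (ha₃ 1) (hb₃ 1)) d₁) d₂]
  · nlinarith [mul_nonneg (mul_nonneg (mul_nonneg (ha₂ 1) (hb₂ 1)) d₁) d₃]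
  · nlinarith [mul_nonneg (mul_nonneg (mul_nonneg (ha₁ 1) (hb₁ 1)) d₂) d₃]
  · nlinarith [mul_nonneg (mul_nonneg (mul_nonneg (ha₁ 0) (hb₁ 0)) d₂) d₃]
  · nlinarith [mul_nonneg (mul_nonneg (mul_nonneg (ha₂ 0) (hb₂ 0)) d₁) d₃]
  · nlinarith [mul_nonneg (mul_nonneg (mul_nonneg (ha₃ 0) (hb₃ 0)) d₁) d₂]

/-- a nonnegative 2×2×2 tensor has nonnegative rank at most 2
iff it is supermodular for some relabeling of each index. -/
theorem stmt_11 (P : Fin 2 → Fin 2 → Fin 2 → ℝ)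
    (hnn : ∀ i j k, 0 ≤ P i j k) :
    NNRank2 P ↔
      ∃ π1 π2 π3 : Equiv.Perm (Fin 2),
        Supermod9 (fun i j k => P (π1 i) (π2 j) (π3 k)) := by
  constructor
  · rintro ⟨a₁, a₂, a₃, b₁, b₂, b₃, ha₁, ha₂, ha₃, hb₁, hb₂, hb₃, hP⟩
    obtain ⟨π₁, h₁⟩ := exists_perm_mul_le_mul a₁ b₁
    obtain ⟨π₂, h₂⟩ := exists_perm_mul_le_mul a₂ b₂
    obtain ⟨π₃, h₃⟩ := exists_perm_mul_le_mul a₃ b₃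
    refine ⟨π₁, π₂, π₃, ?_⟩
    simp only [hP]
    exact supermod9_of_mul_le_mul (fun _ => ha₁ _) (fun _ => ha₂ _) (fun _ => ha₃ _)
      (fun _ => hb₁ _) (fun _ => hb₂ _) (fun _ => hb₃ _) h₁ h₂ h₃
  · rintro ⟨π₁, π₂, π₃, hs⟩
    simpa using (nnrank2_of_supermod9 (fun _ _ _ => hnn _ _ _) hs).comp π₁.symm π₂.symm π₃.symm
end

section
/- Let P be a nonnegative d_1×…×d_n tensor with a decomposition P = a_1⊗…⊗a_n + b_1⊗…⊗b_n where for each r the entries satisfy a_{rk} b_{rl} ≥ a_{rl} b_{rk} whenever k ≤ l (i.e. all 2×2 minors of the d_r×2 matrix (a_r, b_r) are nonnegative, with rows in given order). Then P is e-supermodular: for all multi-indices i = (i_1,…,i_n) and j = (j_1,…,j_n), setting k = (min(i_1,j_1),…,min(i_n,j_n)) and l = (max(i_1,j_1),…,max(i_n,j_n)), one has p_i · p_j ≤ p_k · p_l. -/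
/-!
Expanding `P i * P j`, the terms `∏ a · ∏ a` and `∏ b · ∏ b` are unchanged when `(i, j)` is
replaced by `(min i j, max i j)`, so only the cross term `∏ x + ∏ y` matters, where
`x_r = a_r(i_r) b_r(j_r)` and `y_r = a_r(j_r) b_r(i_r)`. The minor condition bounds both `x_r`
and `y_r` by `v_r = a_r(min) b_r(max)`, and `x_r y_r = u_r v_r` with `u_r = a_r(max) b_r(min)`.
Taking products, `∏ x` and `∏ y` are at most `∏ v` and multiply to `∏ u · ∏ v`; two numbers below
`V` whose product is `U V` with `U ≥ 0` sum to at most `U + V`.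
-/

open Finset

lemma add_le_add_of_mul_eq_mul {R : Type*} [CommRing R] [LinearOrder R] [IsStrictOrderedRing R]
    {x y u v : R} (hu : 0 ≤ u) (hx : x ≤ v) (hy : y ≤ v) (hxy : x * y = u * v) :
    x + y ≤ u + v := by
  rcases le_or_gt v 0 with hv | hv
  · linarith
  · -- `(v - x) (v - y) ≥ 0` expands to `v (x + y) ≤ v² + u v`.
    nlinarith [mul_nonneg (sub_nonneg.2 hx) (sub_nonneg.2 hy)]

lemma Finset.prod_add_prod_le_of_mul_eq_mul {ι R : Type*} [CommRing R] [LinearOrder R]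
    [IsStrictOrderedRing R] (s : Finset ι) {x y u v : ι → R}
    (hx₀ : ∀ i ∈ s, 0 ≤ x i) (hy₀ : ∀ i ∈ s, 0 ≤ y i) (hu₀ : ∀ i ∈ s, 0 ≤ u i)
    (hx : ∀ i ∈ s, x i ≤ v i) (hy : ∀ i ∈ s, y i ≤ v i) (hxy : ∀ i ∈ s, x i * y i = u i * v i) :
    ∏ i ∈ s, x i + ∏ i ∈ s, y i ≤ ∏ i ∈ s, u i + ∏ i ∈ s, v i :=
  add_le_add_of_mul_eq_mul (prod_nonneg hu₀) (prod_le_prod hx₀ hx) (prod_le_prod hy₀ hy)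
    (by rw [← prod_mul_distrib, ← prod_mul_distrib]; exact prod_congr rfl hxy)

lemma prod_mul_prod_eq_prod_min_mul_prod_max {ι : Type*} [Fintype ι] {α : ι → Type*}
    [∀ r, LinearOrder (α r)] {M : Type*} [CommMonoid M] (f : ∀ r, α r → M) (i j : ∀ r, α r) :
    (∏ r, f r (i r)) * ∏ r, f r (j r) =
      (∏ r, f r (min (i r) (j r))) * ∏ r, f r (max (i r) (j r)) := by
  simp only [← prod_mul_distrib, fn_min_mul_fn_max]

lemma mul_le_mul_min_max_of_minor {α M : Type*} [LinearOrder α] [Mul M] [Preorder M]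
    {a b : α → M} (hminor : ∀ k l, k ≤ l → a l * b k ≤ a k * b l) (i j : α) :
    a i * b j ≤ a (min i j) * b (max i j) := by
  rcases le_total i j with h | h
  · rw [min_eq_left h, max_eq_right h]
  · rw [min_eq_right h, max_eq_left h]
    exact hminor j i h

/-- a nonnegative rank-2 decomposition with all 2×2 minors of the
matrices (a_r, b_r) nonnegative yields an e-supermodular tensor. -/
theorem stmt_12 {n : ℕ} (d : Fin n → ℕ)
    (a b : ∀ r, Fin (d r) → ℝ)
    (ha : ∀ r k, 0 ≤ a r k) (hb : ∀ r k, 0 ≤ b r k)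
    (hminor : ∀ r (k l : Fin (d r)), k ≤ l → a r l * b r k ≤ a r k * b r l)
    (P : (∀ r, Fin (d r)) → ℝ)
    (hP : ∀ i, P i = (∏ r, a r (i r)) + ∏ r, b r (i r)) :
    ∀ i j : ∀ r, Fin (d r),
      P i * P j ≤
        P (fun r => min (i r) (j r)) * P (fun r => max (i r) (j r)) := by
  intro i j
  have hcross := univ.prod_add_prod_le_of_mul_eq_mul
    (x := fun r => a r (i r) * b r (j r)) (y := fun r => a r (j r) * b r (i r))
    (u := fun r => a r (max (i r) (j r)) * b r (min (i r) (j r)))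
    (v := fun r => a r (min (i r) (j r)) * b r (max (i r) (j r)))
    (fun r _ => mul_nonneg (ha _ _) (hb _ _)) (fun r _ => mul_nonneg (ha _ _) (hb _ _))
    (fun r _ => mul_nonneg (ha _ _) (hb _ _))
    (fun r _ => mul_le_mul_min_max_of_minor (hminor r) _ _)
    (fun r _ => by
      simpa only [min_comm, max_comm] using mul_le_mul_min_max_of_minor (hminor r) (j r) (i r))
    (fun r _ => by
      rw [mul_mul_mul_comm, mul_comm (b r (j r)), ← fn_max_mul_fn_min (a r),
        ← fn_min_mul_fn_max (b r)]; ring)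
  simp only [prod_mul_distrib] at hcross
  rw [hP, hP, hP, hP]
  linear_combination prod_mul_prod_eq_prod_min_mul_prod_max a i j +
    prod_mul_prod_eq_prod_min_mul_prod_max b i j + hcross
end

section
/- (Auxiliary tensor supermodularity) Let a_r, b_r ∈ ℝ^{d_r}_{≥0} for r = 1,…,n satisfy a_{rk} b_{rl} ≥ a_{rl} b_{rk} for all k ≤ l. Define the 2×d_1×…×d_n tensor Q by q_{1 i_1…i_n} = a_{1i_1}···a_{ni_n} and q_{2 i_1…i_n} = b_{1i_1}···b_{ni_n}. Then Q is e-supermodular: for all indices (i_0,i), (j_0,j), with k = componentwise min and l = componentwise max, q_{i_0 i} q_{j_0 j} ≤ q_{k_0 k} q_{l_0 l}. -/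
/-!
Each slice of `Q` is a product over the coordinates `r`, so `Q s i = ∏ r, F r s (i r)` where
`F r : Fin 2 → Fin (d r) → ℝ` is the `2 × d r` matrix with rows `a r` and `b r`. The minor
condition says exactly that every `F r` is (log-)supermodular in its two arguments, and a product
of nonnegative supermodular factors sharing the first argument is again supermodular.
-/

open Finset

section Supermodular

variable {α R : Type*} [LinearOrder α]

theorem rows_mul_le_min_mul_max [CommMonoid R] [Preorder R] (g h : α → R)
    (hminor : ∀ k l, k ≤ l → g l * h k ≤ g k * h l) (s t : Fin 2) (x y : α) :
    ![g, h] s x * ![g, h] t y ≤ ![g, h] (min s t) (min x y) * ![g, h] (max s t) (max x y) := by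
  rcases le_total x y with hxy | hyx
  · fin_cases s <;> fin_cases t <;> simp [hxy, mul_comm, hminor]
  · fin_cases s <;> fin_cases t <;> simp [hyx, mul_comm, hminor]

theorem prod_mul_prod_le_prod_min_mul_prod_max {ι S : Type*} [Fintype ι] {β : ι → Type*}
    [∀ r, LinearOrder (β r)] [LinearOrder S] [CommSemiring R] [PartialOrder R] [IsOrderedRing R]
    (F : ∀ r, S → β r → R) (hF : ∀ r s x, 0 ≤ F r s x)
    (hsuper : ∀ r s t x y, F r s x * F r t y ≤ F r (min s t) (min x y) * F r (max s t) (max x y))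
    (s t : S) (x y : ∀ r, β r) :
    (∏ r, F r s (x r)) * ∏ r, F r t (y r) ≤
      (∏ r, F r (min s t) (min (x r) (y r))) * ∏ r, F r (max s t) (max (x r) (y r)) := by
  simp only [← prod_mul_distrib]
  exact prod_le_prod (fun r _ ↦ mul_nonneg (hF _ _ _) (hF _ _ _)) fun r _ ↦ hsuper _ _ _ _ _

end Supermodular

/-- the auxiliary 2×d_1×…×d_n tensor Q, with slices the two
rank-one summands, is e-supermodular. -/
theorem stmt_13 {n : ℕ} (d : Fin n → ℕ)
    (a b : ∀ r, Fin (d r) → ℝ)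
    (ha : ∀ r k, 0 ≤ a r k) (hb : ∀ r k, 0 ≤ b r k)
    (hminor : ∀ r (k l : Fin (d r)), k ≤ l → a r l * b r k ≤ a r k * b r l)
    (Q : Fin 2 → (∀ r, Fin (d r)) → ℝ)
    (hQ1 : ∀ i, Q 0 i = ∏ r, a r (i r))
    (hQ2 : ∀ i, Q 1 i = ∏ r, b r (i r)) :
    ∀ (i0 j0 : Fin 2) (i j : ∀ r, Fin (d r)),
      Q i0 i * Q j0 j ≤
        Q (min i0 j0) (fun r => min (i r) (j r)) *
        Q (max i0 j0) (fun r => max (i r) (j r)) := by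
  have hQ : ∀ s i, Q s i = ∏ r, ![a r, b r] s (i r) := by
    intro s i
    fin_cases s
    exacts [hQ1 i, hQ2 i]
  intro i0 j0 i j
  simp only [hQ]
  refine prod_mul_prod_le_prod_min_mul_prod_max (fun r ↦ ![a r, b r]) ?_
    (fun r ↦ rows_mul_le_min_mul_max _ _ (hminor r)) _ _ _ _
  intro r s k
  fin_cases s
  exacts [ha r k, hb r k]
end

section
/- Let A be a nonnegative d×2 real matrix of rank 2 with columns a, b. Then there exists a nonnegative basis {a', b'} of the column span of A such that every column of A lies in the nonnegative span of a' and b', obtained as follows: a'' = a − t b for the maximal t ≥ 0 keeping a'' nonnegative, then b'' = b − s a'' for the maximal s ≥ 0 keeping b'' nonnegative; each of a'', b'' has a zero entry in a position where the other is nonzero. -/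
/-!
Both coefficients are minima of finitely many ratios, `t = min_{b i > 0} a i / b i` and
`s = min_{a'' i > 0} b i / a'' i`, and an index attaining a minimum is where the reduced vector
acquires its zero entry. The passage `(a, b) ↦ (a'', b'')` is a product of two unitriangular
changes of basis, so it preserves the span, and its inverse `a = (1 + t s) a'' + t b''`,
`b = s a'' + b''` has nonnegative coefficients.
-/

theorem exists_pos_apply_of_nonneg_of_ne_zero {ι α : Type*} [Zero α] [PartialOrder α]
    {u : ι → α} (hu : ∀ i, 0 ≤ u i) (hne : u ≠ 0) : ∃ i, 0 < u i := by
  obtain ⟨i, hi⟩ := Function.ne_iff.mp hne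
  exact ⟨i, (hu i).lt_of_ne' hi⟩

theorem exists_isGreatest_sub_mul_nonneg {ι : Type*} [Finite ι] {u v : ι → ℝ}
    (hu : ∀ i, 0 ≤ u i) (hv : ∃ i, 0 < v i) :
    ∃ t, 0 ≤ t ∧ IsGreatest {t | ∀ i, 0 ≤ u i - t * v i} t ∧
      ∃ i, 0 < v i ∧ u i - t * v i = 0 := by
  obtain ⟨i₀, hvi₀ : 0 < v i₀, hmin⟩ :=
    Set.exists_min_image {i | 0 < v i} (fun i => u i / v i) (Set.toFinite _) hv
  have ht₀ : 0 ≤ u i₀ / v i₀ := div_nonneg (hu i₀) hvi₀.le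
  refine ⟨u i₀ / v i₀, ht₀, ⟨fun i => ?_, fun t' ht' => ?_⟩, i₀, hvi₀, ?_⟩
  · rcases lt_or_ge 0 (v i) with hvi | hvi
    · have := hmin i hvi
      rw [div_le_div_iff₀ hvi₀ hvi] at this
      rw [div_mul_eq_mul_div, sub_nonneg, div_le_iff₀ hvi₀]
      linarith
    · linarith [hu i, mul_nonpos_of_nonneg_of_nonpos ht₀ hvi]
  · rw [le_div_iff₀ hvi₀]
    linarith [ht' i₀]
  · rw [div_mul_cancel₀ _ hvi₀.ne', sub_self]

theorem Submodule.span_pair_sub_smul {R M : Type*} [Ring R] [AddCommGroup M] [Module R M]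
    (x y : M) (c : R) : span R {x - c • y, y} = span R {x, y} := by
  apply le_antisymm <;> rw [span_le, Set.insert_subset_iff, Set.singleton_subset_iff] <;>
    refine ⟨?_, subset_span (by simp)⟩
  · exact sub_mem (subset_span (by simp)) (smul_mem _ _ (subset_span (by simp)))
  · simpa using add_mem (subset_span (by simp) : x - c • y ∈ span R {x - c • y, y})
      (smul_mem _ c (subset_span (by simp) : y ∈ span R {x - c • y, y}))

/-- reduction of a nonnegative basis of a rank-2 nonnegative
d×2 matrix to a nonnegative basis {a'', b''} in which each vector has a zero
entry where the other is nonzero, every column lies in the nonnegative span,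
and the span is unchanged. -/
theorem stmt_18 {d : ℕ} (a b : Fin d → ℝ)
    (ha : ∀ i, 0 ≤ a i) (hb : ∀ i, 0 ≤ b i)
    (hind : LinearIndependent ℝ ![a, b]) :
    ∃ t s : ℝ, 0 ≤ t ∧ 0 ≤ s ∧
      (∀ i, 0 ≤ a i - t * b i) ∧
      (∀ t', 0 ≤ t' → (∀ i, 0 ≤ a i - t' * b i) → t' ≤ t) ∧
      (∀ i, 0 ≤ b i - s * (a i - t * b i)) ∧
      (∀ s', 0 ≤ s' → (∀ i, 0 ≤ b i - s' * (a i - t * b i)) → s' ≤ s) ∧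
      (∃ i, a i - t * b i = 0 ∧ 0 < b i - s * (a i - t * b i)) ∧
      (∃ i, b i - s * (a i - t * b i) = 0 ∧ 0 < a i - t * b i) ∧
      Submodule.span ℝ {fun i => a i - t * b i,
          fun i => b i - s * (a i - t * b i)} =
        Submodule.span ℝ {a, b} ∧
      (∃ α β : ℝ, 0 ≤ α ∧ 0 ≤ β ∧
        a = fun i => α * (a i - t * b i) + β * (b i - s * (a i - t * b i))) ∧
      (∃ α β : ℝ, 0 ≤ α ∧ 0 ≤ β ∧
        b = fun i => α * (a i - t * b i) + β * (b i - s * (a i - t * b i))) := by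
  obtain ⟨hb0, hab⟩ : b ≠ 0 ∧ ∀ c : ℝ, c • b ≠ a := by simpa using linearIndependent_fin2.mp hind
  obtain ⟨t, ht0, ⟨hta, htmax⟩, i₀, hbi₀, hai₀⟩ :=
    exists_isGreatest_sub_mul_nonneg ha (exists_pos_apply_of_nonneg_of_ne_zero hb hb0)
  have ha''0 : a - t • b ≠ 0 := sub_ne_zero.mpr (hab t).symm
  obtain ⟨s, hs0, ⟨hsb, hsmax⟩, j₀, haj₀, hbj₀⟩ :=
    exists_isGreatest_sub_mul_nonneg hb (exists_pos_apply_of_nonneg_of_ne_zero hta ha''0)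
  refine ⟨t, s, ht0, hs0, hta, fun _ _ h => htmax h, hsb, fun _ _ h => hsmax h,
    ⟨i₀, hai₀, by simpa [hai₀] using hbi₀⟩, ⟨j₀, hbj₀, haj₀⟩, ?_,
    ⟨1 + t * s, t, by positivity, ht0, by funext i; ring⟩,
    ⟨s, 1, hs0, zero_le_one, by funext i; ring⟩⟩
  change Submodule.span ℝ {a - t • b, b - s • (a - t • b)} = _
  rw [Set.pair_comm, Submodule.span_pair_sub_smul, Set.pair_comm, Submodule.span_pair_sub_smul]
end

section
/- Let N_1 and N_2 be nonzero nonnegative 2×…×2 tensors of dimension n−2 (n ≥ 4). Suppose that for every bipartition (A,B) of {3,…,n}, the block-diagonal matrix with blocks the A|B flattenings of N_1 and N_2 has rank at most 2. Then each N_i has all its flattening ranks equal to 1, hence each N_i is a rank-one tensor (an outer product of nonnegative vectors). -/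
/-!
A nonzero `2 × 2` minor of a flattening of one tensor, together with a nonzero entry of the
same flattening of the other, would be a `3 × 3` minor of the block-diagonal matrix with nonzero
determinant; so every flattening of each `Nᵢ` has rank one. For the flattenings that split off a
single coordinate `r`, rank one is the exchange identity
`N j * N j' = N (j' with j r at r) * N (j with j' r at r)`. Starting from a point `p` with
`N p > 0` and changing one coordinate at a time, it gives
`N i = N p * ∏ r, N (p with i r at r) / N p`, a product of nonnegative factors.
-/

open Finset

/-- The A|B flattening of a 2×…×2 tensor, for a bipartition given by a subset
A of the index set (B is the complement). -/
def flattenAB {m : ℕ} (N : (Fin m → Fin 2) → ℝ) (A : Finset (Fin m)) :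
    Matrix ({x : Fin m // x ∈ A} → Fin 2) ({x : Fin m // x ∉ A} → Fin 2) ℝ :=
  Matrix.of fun ρ γ =>
    N (fun r => if h : r ∈ A then ρ ⟨r, h⟩ else γ ⟨r, h⟩)

open Function

namespace Matrix

variable {ι m n k K : Type*} [Field K] [Fintype n]

theorem card_le_rank_of_det_submatrix_ne_zero [Fintype k] [DecidableEq k] (A : Matrix m n K)
    (r : k → m) (c : k → n) (h : (A.submatrix r c).det ≠ 0) : Fintype.card k ≤ A.rank :=
  (rank_of_det_ne_zero h).symm.le.trans (rank_submatrix_le A r c)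

theorem rank_eq_one_of_minors_eq_zero {A : Matrix m n K} {a : m} {b : n} (hab : A a b ≠ 0)
    (hminor : ∀ ρ ρ' γ γ', A ρ γ * A ρ' γ' = A ρ γ' * A ρ' γ) : A.rank = 1 := by
  refine le_antisymm ?_ ?_
  · have hA : A = vecMulVec (fun ρ => A ρ b) (fun γ => A a γ / A a b) := by
      ext ρ γ
      rw [vecMulVec_apply, mul_div_assoc', eq_div_iff hab, hminor]
    exact hA ▸ rank_vecMulVec_le _ _
  · simpa using card_le_rank_of_det_submatrix_ne_zero A (fun _ : Unit => a) (fun _ => b)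
      (by simpa using hab)

theorem minors_eq_zero_of_rank_blockDiagonal_le_two [Fintype ι] [DecidableEq ι]
    {M : ι → Matrix m n K} (hrank : (blockDiagonal M).rank ≤ 2) {c c' : ι} (hcc : c ≠ c')
    {a : m} {b : n} (hab : M c' a b ≠ 0) (ρ ρ' : m) (γ γ' : n) :
    M c ρ γ * M c ρ' γ' = M c ρ γ' * M c ρ' γ := by
  by_contra hminor
  have hdet : ((blockDiagonal M).submatrix ![(ρ, c), (ρ', c), (a, c')]
      ![(γ, c), (γ', c), (b, c')]).det
      = (M c ρ γ * M c ρ' γ' - M c ρ γ' * M c ρ' γ) * M c' a b := by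
    simp only [det_fin_three, submatrix_apply, blockDiagonal_apply, cons_val_zero, cons_val_one,
      cons_val_two, head_cons, tail_cons, if_true, if_neg hcc, if_neg hcc.symm]
    ring
  have := card_le_rank_of_det_submatrix_ne_zero _ _ _
    (hdet ▸ mul_ne_zero (sub_ne_zero_of_ne hminor) hab)
  simp only [Fintype.card_fin] at this
  omega

end Matrix

section Exchange

variable {ι α K : Type*} [DecidableEq ι] {N : (ι → α) → K}

theorem eq_mul_prod_div_of_exchange [Field K]
    (hexch : ∀ r j j', N j * N j' = N (update j' r (j r)) * N (update j r (j' r)))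
    {p : ι → α} (hp : N p ≠ 0) (i : ι → α) (S : Finset ι) :
    N (S.piecewise i p) = N p * ∏ r ∈ S, N (update p r (i r)) / N p := by
  induction S using Finset.induction_on with
  | empty => simp
  | insert a S ha ih =>
    have hswap := hexch a ((insert a S).piecewise i p) p
    rw [piecewise_insert, update_self, update_idem,
      update_eq_self_iff.2 (piecewise_eq_of_notMem _ _ _ ha).symm, ih] at hswap
    rw [prod_insert ha, piecewise_insert, ← mul_left_inj' hp, hswap]
    field_simp

theorem exists_nonneg_prod_of_exchange [Field K] [LinearOrder K] [IsStrictOrderedRing K]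
    [Fintype ι] [Nonempty ι] (hnn : ∀ i, 0 ≤ N i) (hne : N ≠ 0)
    (hexch : ∀ r j j', N j * N j' = N (update j' r (j r)) * N (update j r (j' r))) :
    ∃ v : ι → α → K, (∀ r s, 0 ≤ v r s) ∧ ∀ i, N i = ∏ r, v r (i r) := by
  obtain ⟨p, hp⟩ := Function.ne_iff.mp hne
  have hpos : 0 < N p := (hnn p).lt_of_ne' hp
  let r₀ := Classical.arbitrary ι
  refine ⟨fun r s => (Pi.mulSingle r₀ (N p) : ι → K) r * (N (update p r s) / N p), ?_,
    fun i => ?_⟩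
  · intro r s
    refine mul_nonneg ?_ (div_nonneg (hnn _) hpos.le)
    rcases eq_or_ne r r₀ with rfl | hr
    · simpa using hpos.le
    · simp [Pi.mulSingle_eq_of_ne hr]
  · rw [prod_mul_distrib, Fintype.prod_pi_mulSingle',
      ← eq_mul_prod_div_of_exchange hexch hp i univ, piecewise_univ]

end Exchange

theorem flattenAB_apply_restrict {m : ℕ} (N : (Fin m → Fin 2) → ℝ) (A : Finset (Fin m))
    (j j' : Fin m → Fin 2) :
    flattenAB N A (fun x => j x) (fun x => j' x) = N (A.piecewise j j') :=
  rfl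

/-- if N₁, N₂ are nonzero nonnegative 2×…×2 tensors such that for
every bipartition (A,B) the block-diagonal matrix of their A|B flattenings has
rank at most 2, then each Nᵢ has all flattening ranks equal to 1 and is an
outer product of nonnegative vectors. -/
theorem stmt_19 {m : ℕ} (hm : 2 ≤ m)
    (N : Fin 2 → (Fin m → Fin 2) → ℝ)
    (hnn : ∀ c i, 0 ≤ N c i) (hne : ∀ c, N c ≠ 0)
    (hrank : ∀ A : Finset (Fin m),
      (Matrix.of fun (x : Fin 2 × ({y : Fin m // y ∈ A} → Fin 2))
          (z : Fin 2 × ({y : Fin m // y ∉ A} → Fin 2)) =>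
          if x.1 = z.1 then flattenAB (N x.1) A x.2 z.2 else 0).rank ≤ 2) :
    ∀ c : Fin 2,
      (∀ A : Finset (Fin m), (flattenAB (N c) A).rank = 1) ∧
      ∃ v : Fin m → Fin 2 → ℝ, (∀ r s, 0 ≤ v r s) ∧
        ∀ i, N c i = ∏ r, v r (i r) := by
  intro c
  have : Nonempty (Fin m) := ⟨⟨0, by omega⟩⟩
  have hblock (A : Finset (Fin m)) :
      (Matrix.blockDiagonal fun c => flattenAB (N c) A).rank ≤ 2 :=
    (Matrix.rank_submatrix _ (Equiv.prodComm _ _) (Equiv.prodComm _ _)).symm.trans_le (hrank A)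
  obtain ⟨c', hc'⟩ := exists_ne c
  obtain ⟨p, hp⟩ := Function.ne_iff.mp (hne c')
  have hminor (A : Finset (Fin m)) := Matrix.minors_eq_zero_of_rank_blockDiagonal_le_two
    (hblock A) hc'.symm (a := fun x => p x) (b := fun x => p x)
    (by rwa [flattenAB_apply_restrict, piecewise_same])
  obtain ⟨i, hi⟩ := Function.ne_iff.mp (hne c)
  refine ⟨fun A => Matrix.rank_eq_one_of_minors_eq_zero (a := fun x => i x) (b := fun x => i x)
    (by rwa [flattenAB_apply_restrict, piecewise_same]) (hminor A),
    exists_nonneg_prod_of_exchange (hnn c) (hne c) fun r j j' => ?_⟩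
  simpa only [flattenAB_apply_restrict, piecewise_same, piecewise_singleton] using
    hminor {r} (fun x => j x) (fun x => j' x) (fun x => j x) (fun x => j' x)
end
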